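/- arXiv:2208.07488 — 5 statements merged into one kernel-verified Lean document; each statement's English description precedes it below -/
import Mathlib

section
/- Let F : ℝⁿ ⇉ ℝⁿ be a multifunction that is locally bounded and locally Lipschitz with respect to the Hausdorff distance: on the closed ball of radius 2r* around x, all velocities have norm at most M and F(y) ⊆ F(z) + K‖y−z‖·B̄₁(0) for y,z in that ball. Suppose the minimal Hamiltonian h_F(x,ξ) := inf_{v ∈ F(x)} ⟨v,ξ⟩ is strictly positive for some ξ ≠ 0, and set x* := x + (r*/‖ξ‖)ξ. Then there exists R ∈ (0, r*) such that for all y in the closed ball B̄_R(x), h_F(y, x* − y) > (1/2)·h_F(x, x* − x). In fact any R < h_F(x, x*−x)/(2(M + 3r*K)) works. -/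
/-!
For `y ∈ B̄_R(x)` and `v ∈ F(y)` pick `w ∈ F(x)` with `‖v - w‖ ≤ K R` and split
`⟪v, x* - y⟫ = ⟪w, x* - x⟫ + ⟪v - w, x* - y⟫ + ⟪w, x - y⟫`. Since `‖x* - y‖ ≤ 2r*`, the last two
terms are at least `-R (2r*K + M)`, so `h_F(y, x* - y) ≥ h_F(x, x* - x) - R (M + 2r*K)`, which
exceeds half of `h_F(x, x* - x) = (r*/‖ξ‖) h_F(x, ξ) > 0` for `R` below the stated threshold.
That threshold is below `r*/2` because `h_F(x, x* - x) ≤ M r*`.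
-/

open Metric Set

open scoped RealInnerProductSpace

section MinimalHamiltonian

variable {E : Type*} [NormedAddCommGroup E] [InnerProductSpace ℝ E]

/-- The minimal Hamiltonian of the paper is `h_F(y, η) = minHam (F y) η`. -/
noncomputable def minHam (S : Set E) (η : E) : ℝ :=
  sInf ((fun v => ⟪v, η⟫) '' S)

lemma neg_mul_le_inner {v η : E} {a b : ℝ} (hv : ‖v‖ ≤ a) (hη : ‖η‖ ≤ b) :
    -(a * b) ≤ ⟪v, η⟫ := by
  have hvη : ‖v‖ * ‖η‖ ≤ a * b :=
    mul_le_mul hv hη (norm_nonneg η) ((norm_nonneg v).trans hv)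
  linarith [neg_abs_le ⟪v, η⟫, abs_real_inner_le_norm v η]

lemma bddBelow_inner_image {S : Set E} {M : ℝ} (hS : ∀ v ∈ S, ‖v‖ ≤ M) (η : E) :
    BddBelow ((fun v => ⟪v, η⟫) '' S) := by
  refine ⟨-(M * ‖η‖), ?_⟩
  rintro _ ⟨v, hv, rfl⟩
  exact neg_mul_le_inner (hS v hv) le_rfl

lemma minHam_le_inner {S : Set E} {M : ℝ} (hS : ∀ v ∈ S, ‖v‖ ≤ M) {v : E} (hv : v ∈ S)
    (η : E) : minHam S η ≤ ⟪v, η⟫ :=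
  csInf_le (bddBelow_inner_image hS η) ⟨v, hv, rfl⟩

lemma le_minHam {S : Set E} (hS : S.Nonempty) {a : ℝ} {η : E} (h : ∀ v ∈ S, a ≤ ⟪v, η⟫) :
    a ≤ minHam S η :=
  le_csInf (hS.image _) (by rintro _ ⟨v, hv, rfl⟩; exact h v hv)

lemma minHam_smul (S : Set E) {c : ℝ} (hc : 0 ≤ c) (η : E) :
    minHam S (c • η) = c * minHam S η := by
  unfold minHam
  rw [← smul_eq_mul, ← Real.sInf_smul_of_nonneg hc, ← Set.image_smul, Set.image_image]
  simp only [real_inner_smul_right, smul_eq_mul]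

lemma minHam_le_mul_norm {S : Set E} (hS : S.Nonempty) {M : ℝ} (hM : ∀ v ∈ S, ‖v‖ ≤ M)
    (η : E) : minHam S η ≤ M * ‖η‖ := by
  obtain ⟨v, hv⟩ := hS
  calc minHam S η ≤ ⟪v, η⟫ := minHam_le_inner hM hv η
    _ ≤ ‖v‖ * ‖η‖ := real_inner_le_norm v η
    _ ≤ M * ‖η‖ := mul_le_mul_of_nonneg_right (hM v hv) (norm_nonneg η)

lemma sub_le_minHam_of_forall_exists_norm_sub_le {S T : Set E} {M δ : ℝ} (hS : S.Nonempty)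
    (hT : ∀ w ∈ T, ‖w‖ ≤ M) (hST : ∀ v ∈ S, ∃ w ∈ T, ‖v - w‖ ≤ δ) (η η' : E) :
    minHam T η - δ * ‖η'‖ - M * ‖η' - η‖ ≤ minHam S η' := by
  refine le_minHam hS fun v hv => ?_
  obtain ⟨w, hw, hvw⟩ := hST v hv
  have hsplit : ⟪v, η'⟫ = ⟪w, η⟫ + ⟪v - w, η'⟫ + ⟪w, η' - η⟫ := by
    simp only [inner_sub_left, inner_sub_right]
    ring
  linarith [minHam_le_inner hT hw η, neg_mul_le_inner hvw (le_refl ‖η'‖),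
    neg_mul_le_inner (hT w hw) (le_refl ‖η' - η‖)]

lemma sub_le_minHam_of_mem_closedBall {F : E → Set E} {x p y : E} {r M K R : ℝ}
    (hne : ∀ y, (F y).Nonempty) (hM : ∀ y ∈ closedBall x (2 * r), ∀ v ∈ F y, ‖v‖ ≤ M)
    (hLip : ∀ y ∈ closedBall x (2 * r), ∀ z ∈ closedBall x (2 * r),
      ∀ v ∈ F y, ∃ w ∈ F z, ‖v - w‖ ≤ K * ‖y - z‖)
    (hK : 0 ≤ K) (hp : ‖p - x‖ ≤ r) (hRr : R ≤ r) (hy : y ∈ closedBall x R) :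
    minHam (F x) (p - x) - R * (M + 2 * r * K) ≤ minHam (F y) (p - y) := by
  have hyx : ‖y - x‖ ≤ R := by rwa [← dist_eq_norm]
  have hx2 : x ∈ closedBall x (2 * r) :=
    mem_closedBall_self (by linarith [norm_nonneg (y - x)])
  have hy2 : y ∈ closedBall x (2 * r) := by
    rw [mem_closedBall, dist_eq_norm]
    linarith [norm_nonneg (p - x)]
  have hM0 : 0 ≤ M := (norm_nonneg _).trans (hM x hx2 _ (hne x).some_mem)
  have hpy : ‖p - y‖ ≤ 2 * r := by
    calc ‖p - y‖ = ‖(p - x) - (y - x)‖ := by rw [sub_sub_sub_cancel_right]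
      _ ≤ ‖p - x‖ + ‖y - x‖ := norm_sub_le _ _
      _ ≤ 2 * r := by linarith
  have hST : ∀ v ∈ F y, ∃ w ∈ F x, ‖v - w‖ ≤ K * R := fun v hv => by
    obtain ⟨w, hw, hvw⟩ := hLip y hy2 x hx2 v hv
    exact ⟨w, hw, hvw.trans (mul_le_mul_of_nonneg_left hyx hK)⟩
  have h := sub_le_minHam_of_forall_exists_norm_sub_le (hne y) (hM x hx2) hST (p - x) (p - y)
  have hxy : ‖x - y‖ ≤ R := by rwa [norm_sub_rev]
  rw [sub_sub_sub_cancel_left] at h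
  nlinarith [mul_le_mul_of_nonneg_left hpy (mul_nonneg hK ((norm_nonneg _).trans hyx)),
    mul_le_mul_of_nonneg_left hxy hM0]

end MinimalHamiltonian

/-- Local persistence of a strictly positive minimal Hamiltonian. -/
theorem posHam_nbhd {n : ℕ}
    (F : EuclideanSpace ℝ (Fin n) → Set (EuclideanSpace ℝ (Fin n)))
    (hne : ∀ y, (F y).Nonempty)
    (hF : EuclideanSpace ℝ (Fin n) → EuclideanSpace ℝ (Fin n) → ℝ)
    (hFdef : ∀ y η, hF y η = sInf ((fun v => (inner ℝ v η : ℝ)) '' F y))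
    (x ξ : EuclideanSpace ℝ (Fin n)) (hξ : ξ ≠ 0)
    (rstar : ℝ) (hrstar : 0 < rstar)
    (M : ℝ) (hM : ∀ y ∈ closedBall x (2 * rstar), ∀ v ∈ F y, ‖v‖ ≤ M)
    (K : ℝ) (hK : 0 < K)
    (hLip : ∀ y ∈ closedBall x (2 * rstar), ∀ z ∈ closedBall x (2 * rstar),
      ∀ v ∈ F y, ∃ w ∈ F z, ‖v - w‖ ≤ K * ‖y - z‖)
    (hpos : 0 < hF x ξ)
    (xstar : EuclideanSpace ℝ (Fin n)) (hxstar : xstar = x + (rstar / ‖ξ‖) • ξ) :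
    (∃ R ∈ Ioo (0:ℝ) rstar, ∀ y ∈ closedBall x R,
        (1/2) * hF x (xstar - x) < hF y (xstar - y)) ∧
    (∀ R : ℝ, 0 < R → R < hF x (xstar - x) / (2 * (M + 3 * rstar * K)) →
      R < rstar ∧ ∀ y ∈ closedBall x R,
        (1/2) * hF x (xstar - x) < hF y (xstar - y)) := by
  have hH : ∀ y η, hF y η = minHam (F y) η := hFdef
  simp only [hH] at hpos ⊢
  have hx : x ∈ closedBall x (2 * rstar) := mem_closedBall_self (by positivity)
  have hM0 : 0 ≤ M := (norm_nonneg _).trans (hM x hx _ (hne x).some_mem)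
  have hstep : xstar - x = (rstar / ‖ξ‖) • ξ := by rw [hxstar, add_sub_cancel_left]
  have hnorm : ‖xstar - x‖ = rstar := by
    rw [hstep, norm_smul, Real.norm_of_nonneg (by positivity),
      div_mul_cancel₀ _ (norm_ne_zero_iff.mpr hξ)]
  have h₀pos : 0 < minHam (F x) (xstar - x) := by
    rw [hstep, minHam_smul _ (by positivity)]
    exact mul_pos (div_pos hrstar (norm_pos_iff.mpr hξ)) hpos
  have h₀le : minHam (F x) (xstar - x) ≤ M * rstar :=
    hnorm ▸ minHam_le_mul_norm (hne x) (hM x hx) _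
  have hD : 0 < M + 3 * rstar * K := by positivity
  have key : ∀ R : ℝ, 0 < R → R < minHam (F x) (xstar - x) / (2 * (M + 3 * rstar * K)) →
      R < rstar ∧ ∀ y ∈ closedBall x R,
        1 / 2 * minHam (F x) (xstar - x) < minHam (F y) (xstar - y) := by
    intro R hR hRlt
    rw [lt_div_iff₀ (by positivity)] at hRlt
    have hRr : R < rstar := by nlinarith [mul_pos hrstar hK]
    refine ⟨hRr, fun y hy => ?_⟩
    have := sub_le_minHam_of_mem_closedBall hne hM hLip hK.le hnorm.le hRr.le hy
    nlinarith [mul_pos hR (mul_pos hrstar hK)]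
  refine ⟨?_, key⟩
  obtain ⟨hRr, hball⟩ := key (minHam (F x) (xstar - x) / (4 * (M + 3 * rstar * K)))
    (by positivity) (div_lt_div_of_pos_left h₀pos (by positivity) (by linarith))
  exact ⟨_, ⟨by positivity, hRr⟩, hball⟩
end

section
/- Let d_c be an extended quasi-metric on a space X, O ⊆ X nonempty, clr(x) := inf_{y∈O} d_c(x,y). Let π : [0,T] → X be a path and c : [0,T] × [0,T] → [0,∞) a cost functional satisfying d_c(π(s), π(t)) ≤ c(s,t) for s ≤ t, c additive (c(s,u) = c(s,t) + c(t,u) for s ≤ t ≤ u), and c(s,t) → 0 as t − s → 0 (continuity of the cost integral). If clr(π(τ)) < ∞ for some τ ∈ (0,T), then the one-sided limits lim_{t→τ⁻} clr(π(t)) and lim_{t→τ⁺} clr(π(t)) exist in [0,∞], and lim_{t→τ⁻} clr(π(t)) ≤ clr(π(τ)) ≤ lim_{t→τ⁺} clr(π(t)). -/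
open ENNReal Filter Set Topology

/-!
Clearance is one-sided Lipschitz for `d`: `clr x ≤ d x y + clr y`. Along the path, `d (π s) (π t)`
is dominated by the cost, so `clr (π t) + c 0 t` is nondecreasing on `[0, T]`. A monotone function
has one-sided limits bracketing its value, and subtracting the finite, continuous accumulated cost
`c 0 t` preserves this.
-/

theorem biInf_le_add_biInf {X : Type*} {d : X → X → ℝ≥0∞}
    (htri : ∀ x y z, d x y ≤ d x z + d z y) (O : Set X) (x z : X) :
    ⨅ y ∈ O, d x y ≤ d x z + ⨅ y ∈ O, d z y := by
  simp_rw [ENNReal.add_iInf]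
  exact iInf₂_mono fun y _ => htri x y z

section OneSidedLimits

variable {α β : Type*} [LinearOrder α] [TopologicalSpace α] [OrderTopology α] [DenselyOrdered α]
  [CompleteLinearOrder β] [TopologicalSpace β] [OrderTopology β]
  {h : α → β} {a b τ : α}

theorem MonotoneOn.exists_tendsto_nhdsWithin_Ioo_left_le (hh : MonotoneOn h (Icc a b))
    (hτ : τ ∈ Ioo a b) : ∃ L, Tendsto h (𝓝[Ioo a τ] τ) (𝓝 L) ∧ L ≤ h τ := by
  have hsub : Ioo a τ ⊆ Icc a b := fun t ht => ⟨ht.1.le, ht.2.le.trans hτ.2.le⟩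
  refine ⟨sSup (h '' Ioo a τ), ?_, sSup_le ?_⟩
  · rw [nhdsWithin_Ioo_eq_nhdsLT hτ.1]
    exact (hh.mono hsub).tendsto_nhdsWithin_Ioo_left (nonempty_Ioo.2 hτ.1) (OrderTop.bddAbove _)
  · rintro _ ⟨t, ht, rfl⟩
    exact hh (hsub ht) (Ioo_subset_Icc_self hτ) ht.2.le

theorem MonotoneOn.exists_tendsto_nhdsWithin_Ioo_right_ge (hh : MonotoneOn h (Icc a b))
    (hτ : τ ∈ Ioo a b) : ∃ L, Tendsto h (𝓝[Ioo τ b] τ) (𝓝 L) ∧ h τ ≤ L := by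
  have hsub : Ioo τ b ⊆ Icc a b := fun t ht => ⟨hτ.1.le.trans ht.1.le, ht.2.le⟩
  refine ⟨sInf (h '' Ioo τ b), ?_, le_sInf ?_⟩
  · rw [nhdsWithin_Ioo_eq_nhdsGT hτ.2]
    exact (hh.mono hsub).tendsto_nhdsWithin_Ioo_right (nonempty_Ioo.2 hτ.2) (OrderBot.bddBelow _)
  · rintro _ ⟨t, ht, rfl⟩
    exact hh (Ioo_subset_Icc_self hτ) (hsub ht) ht.1.le

end OneSidedLimits

theorem ENNReal.Tendsto.of_add_right {ι : Type*} {l : Filter ι} {f g : ι → ℝ≥0∞} {L M : ℝ≥0∞}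
    (hfg : Tendsto (f + g) l (𝓝 L)) (hg : Tendsto g l (𝓝 M)) (hM : M ≠ ⊤)
    (hg_top : ∀ i, g i ≠ ⊤) : Tendsto f l (𝓝 (L - M)) :=
  (ENNReal.Tendsto.sub hfg hg (Or.inr hM)).congr fun i =>
    ENNReal.add_sub_cancel_right (hg_top i)

theorem exists_tendsto_nhdsWithin_Ioo_of_monotoneOn_add {α : Type*} [LinearOrder α]
    [TopologicalSpace α] [OrderTopology α] [DenselyOrdered α] {f g : α → ℝ≥0∞} {a b τ : α}
    (hfg : MonotoneOn (f + g) (Icc a b)) (hg : ContinuousWithinAt g (Icc a b) τ)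
    (hg_top : ∀ t, g t ≠ ⊤) (hτ : τ ∈ Ioo a b) :
    ∃ L₁ L₂ : ℝ≥0∞, Tendsto f (𝓝[Ioo a τ] τ) (𝓝 L₁) ∧ Tendsto f (𝓝[Ioo τ b] τ) (𝓝 L₂) ∧
      L₁ ≤ f τ ∧ f τ ≤ L₂ := by
  obtain ⟨L₁, hL₁, hL₁τ⟩ := hfg.exists_tendsto_nhdsWithin_Ioo_left_le hτ
  obtain ⟨L₂, hL₂, hL₂τ⟩ := hfg.exists_tendsto_nhdsWithin_Ioo_right_ge hτ
  have hf : ∀ t, f t = (f + g) t - g t := fun t => (ENNReal.add_sub_cancel_right (hg_top t)).symm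
  refine ⟨L₁ - g τ, L₂ - g τ,
    ENNReal.Tendsto.of_add_right hL₁ (hg.mono fun t ht => ⟨ht.1.le, ht.2.le.trans hτ.2.le⟩)
      (hg_top τ) hg_top,
    ENNReal.Tendsto.of_add_right hL₂ (hg.mono fun t ht => ⟨hτ.1.le.trans ht.1.le, ht.2.le⟩)
      (hg_top τ) hg_top, ?_, ?_⟩
  · rw [hf τ]; exact tsub_le_tsub_right hL₁τ _
  · rw [hf τ]; exact tsub_le_tsub_right hL₂τ _

section AdditiveCost

variable {c : ℝ → ℝ → ℝ} {a b : ℝ}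

theorem dist_cost_eq
    (hc_nonneg : ∀ s t, a ≤ s → s ≤ t → t ≤ b → 0 ≤ c s t)
    (hc_add : ∀ s t u, a ≤ s → s ≤ t → t ≤ u → u ≤ b → c s u = c s t + c t u)
    {s t : ℝ} (hs : a ≤ s) (hst : s ≤ t) (ht : t ≤ b) :
    dist (c a t) (c a s) = c s t := by
  rw [hc_add a s t le_rfl hs hst ht, Real.dist_eq, add_sub_cancel_left,
    abs_of_nonneg (hc_nonneg s t hs hst ht)]

theorem continuousOn_cost
    (hc_nonneg : ∀ s t, a ≤ s → s ≤ t → t ≤ b → 0 ≤ c s t)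
    (hc_add : ∀ s t u, a ≤ s → s ≤ t → t ≤ u → u ≤ b → c s u = c s t + c t u)
    (hc_small : ∀ ε > (0:ℝ), ∃ δ > (0:ℝ), ∀ s t, a ≤ s → s ≤ t → t ≤ b →
      t - s < δ → c s t < ε) :
    ContinuousOn (c a) (Icc a b) := by
  refine Metric.continuousOn_iff.2 fun τ hτ ε hε => ?_
  obtain ⟨δ, hδ, hsmall⟩ := hc_small ε hε
  refine ⟨δ, hδ, fun t ht htτ => ?_⟩
  rw [Real.dist_eq, abs_lt] at htτ
  rcases le_total t τ with htτ' | hτt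
  · rw [dist_comm, dist_cost_eq hc_nonneg hc_add ht.1 htτ' hτ.2]
    exact hsmall t τ ht.1 htτ' hτ.2 (by linarith)
  · rw [dist_cost_eq hc_nonneg hc_add hτ.1 hτt ht.2]
    exact hsmall τ t hτ.1 hτt ht.2 htτ.2

theorem monotoneOn_add_ofReal_cost
    (hc_nonneg : ∀ s t, a ≤ s → s ≤ t → t ≤ b → 0 ≤ c s t)
    (hc_add : ∀ s t u, a ≤ s → s ≤ t → t ≤ u → u ≤ b → c s u = c s t + c t u)
    {f : ℝ → ℝ≥0∞}
    (hf : ∀ s t, a ≤ s → s ≤ t → t ≤ b → f s ≤ ENNReal.ofReal (c s t) + f t) :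
    MonotoneOn (f + fun t => ENNReal.ofReal (c a t)) (Icc a b) := by
  intro s hs t ht hst
  calc f s + ENNReal.ofReal (c a s)
      ≤ ENNReal.ofReal (c s t) + f t + ENNReal.ofReal (c a s) := by
        gcongr; exact hf s t hs.1 hst ht.2
    _ = f t + (ENNReal.ofReal (c a s) + ENNReal.ofReal (c s t)) := by ring
    _ = f t + ENNReal.ofReal (c a t) := by
        rw [← ENNReal.ofReal_add (hc_nonneg a s le_rfl hs.1 hs.2) (hc_nonneg s t hs.1 hst ht.2),
          ← hc_add a s t le_rfl hs.1 hst ht.2]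

end AdditiveCost

theorem clearance_one_sided_limits_general {X : Type*} (d : X → X → ℝ≥0∞)
    (htri : ∀ x y z, d x y ≤ d x z + d z y)
    (O : Set X)
    (clr : X → ℝ≥0∞) (hclr : ∀ x, clr x = ⨅ y ∈ O, d x y)
    (T : ℝ) (π : ℝ → X)
    (c : ℝ → ℝ → ℝ) (hc_nonneg : ∀ s t, 0 ≤ c s t)
    (hc_dom : ∀ s t, 0 ≤ s → s ≤ t → t ≤ T → d (π s) (π t) ≤ ENNReal.ofReal (c s t))
    (hc_add : ∀ s t u, 0 ≤ s → s ≤ t → t ≤ u → u ≤ T → c s u = c s t + c t u)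
    (hc_cont : ∀ ε > (0:ℝ), ∃ δ > (0:ℝ), ∀ s t, 0 ≤ s → s ≤ t → t ≤ T →
      t - s < δ → c s t < ε)
    (τ : ℝ) (hτ : τ ∈ Ioo 0 T) :
    ∃ L₁ L₂ : ℝ≥0∞,
      Tendsto (fun t => clr (π t)) (𝓝[Ioo 0 τ] τ) (𝓝 L₁) ∧
      Tendsto (fun t => clr (π t)) (𝓝[Ioo τ T] τ) (𝓝 L₂) ∧
      L₁ ≤ clr (π τ) ∧ clr (π τ) ≤ L₂ := by
  have hc_nonneg' : ∀ s t, 0 ≤ s → s ≤ t → t ≤ T → 0 ≤ c s t := fun s t _ _ _ => hc_nonneg s t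
  have hclr_le : ∀ s t, 0 ≤ s → s ≤ t → t ≤ T →
      clr (π s) ≤ ENNReal.ofReal (c s t) + clr (π t) := fun s t hs hst ht => by
    rw [hclr, hclr]
    exact (biInf_le_add_biInf htri O _ (π t)).trans (by gcongr; exact hc_dom s t hs hst ht)
  have hcost : ContinuousWithinAt (fun t => ENNReal.ofReal (c 0 t)) (Icc 0 T) τ :=
    ENNReal.continuous_ofReal.continuousAt.comp_continuousWithinAt
      (continuousOn_cost hc_nonneg' hc_add hc_cont τ (Ioo_subset_Icc_self hτ))
  exact exists_tendsto_nhdsWithin_Ioo_of_monotoneOn_add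
    (monotoneOn_add_ofReal_cost hc_nonneg' hc_add hclr_le) hcost (fun _ => ofReal_ne_top) hτ

/-- One-sided limits of clearance along an admissible trajectory. -/
theorem clearance_one_sided_limits {X : Type*} (d : X → X → ℝ≥0∞)
    (hzero : ∀ x y, d x y = 0 ↔ x = y)
    (htri : ∀ x y z, d x y ≤ d x z + d z y)
    (O : Set X) (hO : O.Nonempty)
    (clr : X → ℝ≥0∞) (hclr : ∀ x, clr x = ⨅ y ∈ O, d x y)
    (T : ℝ) (hT : 0 < T) (π : ℝ → X)
    (c : ℝ → ℝ → ℝ) (hc_nonneg : ∀ s t, 0 ≤ c s t)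
    (hc_dom : ∀ s t, 0 ≤ s → s ≤ t → t ≤ T → d (π s) (π t) ≤ ENNReal.ofReal (c s t))
    (hc_add : ∀ s t u, 0 ≤ s → s ≤ t → t ≤ u → u ≤ T → c s u = c s t + c t u)
    (hc_cont : ∀ ε > (0:ℝ), ∃ δ > (0:ℝ), ∀ s t, 0 ≤ s → s ≤ t → t ≤ T →
      t - s < δ → c s t < ε)
    (τ : ℝ) (hτ : τ ∈ Ioo 0 T) (hfin : clr (π τ) < ⊤) :
    ∃ L₁ L₂ : ℝ≥0∞,
      Tendsto (fun t => clr (π t)) (𝓝[Ioo 0 τ] τ) (𝓝 L₁) ∧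
      Tendsto (fun t => clr (π t)) (𝓝[Ioo τ T] τ) (𝓝 L₂) ∧
      L₁ ≤ clr (π τ) ∧ clr (π τ) ≤ L₂ :=
  clearance_one_sided_limits_general d htri O clr hclr T π c hc_nonneg hc_dom hc_add hc_cont τ hτ
end

section
/- Let X be a topological space, clr : X → [0,∞], and for ρ > 0 define the propagating wave W_ρ := {x ∈ X : clr(x) < ρ}. For x with clr(x) < ∞ define ρ_min(x) := inf{ρ > 0 : x ∈ ∂W_ρ} and ρ_max(x) := sup{ρ > 0 : x ∈ ∂W_ρ}, and let E := {x : ρ_min(x) < ρ_max(x)}. Assume clr is lower semicontinuous and that for every x with clr(x) < ∞ and every ρ with ρ_min(x) ≤ ρ < ρ_max(x), x ∈ ∂W_ρ (i.e., the set of ρ with x ∈ ∂W_ρ is an interval). Then for x in the open set where clr < ∞: clr is discontinuous at x if and only if x ∈ E. -/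
open ENNReal Set Topology

/- Lower semicontinuity leaves upper semicontinuity as the only way continuity can fail at `x`,
and upper semicontinuity fails exactly when `x` lies on the frontier of some strict sublevel set
`{f < ρ}` with `f x < ρ`. Such radii are at most `ρmax x`, and conversely the interval hypothesis
puts `x` on `frontier (W ρ)` for every `ρ` strictly between `clr x = ρmin x` and `ρmax x`. -/

theorem mem_frontier_sublevel_iff {X α : Type*} [TopologicalSpace X] [LT α] {f : X → α} {x : X}
    {ρ : α} (hρ : f x < ρ) : x ∈ frontier {y | f y < ρ} ↔ ¬∀ᶠ y in 𝓝 x, f y < ρ := by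
  rw [mem_frontier_iff_notMem_interior (s := {y | f y < ρ}) hρ, mem_interior_iff_mem_nhds]
  rfl

theorem LowerSemicontinuous.not_continuousAt_iff_exists_mem_frontier {X α : Type*}
    [TopologicalSpace X] [LinearOrder α] [TopologicalSpace α] [OrderTopology α] {f : X → α}
    (hf : LowerSemicontinuous f) (x : X) :
    ¬ContinuousAt f x ↔ ∃ ρ, f x < ρ ∧ x ∈ frontier {y | f y < ρ} := by
  simp only [continuousAt_iff_lower_upperSemicontinuousAt, and_iff_right (hf x),
    upperSemicontinuousAt_iff, not_forall, exists_prop]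
  exact exists_congr fun ρ => and_congr_right fun hρ => (mem_frontier_sublevel_iff hρ).symm

theorem discontinuous_iff_envelope_general {X : Type*} [TopologicalSpace X]
    (clr : X → ℝ≥0∞) (hlsc : LowerSemicontinuous clr)
    (W : ℝ≥0∞ → Set X) (hW : ∀ ρ, W ρ = {x | clr x < ρ})
    (ρmin ρmax : X → ℝ≥0∞)
    (hρmax : ∀ x, ρmax x = sSup {ρ | 0 < ρ ∧ x ∈ frontier (W ρ)})
    -- the set of radii at which `x` is a wave-boundary point is an interval
    (hinterval : ∀ x, clr x < ⊤ → ∀ ρ, ρmin x ≤ ρ → ρ < ρmax x → x ∈ frontier (W ρ))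
    -- lower semicontinuity gives `ρmin = clr`
    (hmin_eq : ∀ x, clr x < ⊤ → ρmin x = clr x)
    (E : Set X) (hE : E = {x | ρmin x < ρmax x}) :
    ∀ x : X, clr x < ⊤ → (¬ ContinuousAt clr x ↔ x ∈ E) := by
  intro x hx
  simp only [hE, mem_ofPred_eq, hmin_eq x hx, hlsc.not_continuousAt_iff_exists_mem_frontier]
  constructor
  · rintro ⟨ρ, hρ, hfrontier⟩
    have hρ_le : ρ ≤ ρmax x := hρmax x ▸ le_sSup ⟨pos_of_gt hρ, hW ρ ▸ hfrontier⟩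
    exact hρ.trans_le hρ_le
  · intro hlt
    obtain ⟨ρ, hρ, hρmax_lt⟩ := exists_between hlt
    exact ⟨ρ, hρ, hW ρ ▸ hinterval x hx ρ (hmin_eq x hx ▸ hρ.le) hρmax_lt⟩

/-- Characterization of free-space discontinuities of clearance as wave-envelope points. -/
theorem discontinuous_iff_envelope {X : Type*} [TopologicalSpace X]
    (clr : X → ℝ≥0∞) (hlsc : LowerSemicontinuous clr)
    (W : ℝ≥0∞ → Set X) (hW : ∀ ρ, W ρ = {x | clr x < ρ})
    (ρmin ρmax : X → ℝ≥0∞)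
    (hρmin : ∀ x, ρmin x = sInf {ρ | 0 < ρ ∧ x ∈ frontier (W ρ)})
    (hρmax : ∀ x, ρmax x = sSup {ρ | 0 < ρ ∧ x ∈ frontier (W ρ)})
    -- the set of radii at which `x` is a wave-boundary point is an interval
    (hinterval : ∀ x, clr x < ⊤ → ∀ ρ, ρmin x ≤ ρ → ρ < ρmax x → x ∈ frontier (W ρ))
    -- lower semicontinuity gives `ρmin = clr`
    (hmin_eq : ∀ x, clr x < ⊤ → ρmin x = clr x)
    (E : Set X) (hE : E = {x | ρmin x < ρmax x}) :
    ∀ x : X, clr x < ⊤ → (¬ ContinuousAt clr x ↔ x ∈ E) :=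
  discontinuous_iff_envelope_general clr hlsc W hW ρmin ρmax hρmax hinterval hmin_eq E hE
end

section
/- In the Galaga system (ẋ₁ = u ∈ [−1,1], ẋ₂ = 1, cost = time) with free space X_free = (−1,2)×(−∞,0] ∪ (−5,2)×(0,∞) and obstacle X_obst = ℝ² \ X_free, the clearance of x = (−1/2, −1) equals 1/2, and the clearance of z = (−1/2, 0) equals 5/2; in particular clr(z) − clr(x) = 2 > 1 = d_c(x,z), so clearance is not Lipschitz with respect to the cost quasi-metric. -/
open Set MeasureTheory ENNReal

/-- Free space of the Galaga system: a vertical passage opening into a wider passage. -/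
def GalagaFree : Set (ℝ × ℝ) :=
  (Ioo (-1 : ℝ) 2 ×ˢ Iic (0 : ℝ)) ∪ (Ioo (-5 : ℝ) 2 ×ˢ Ioi (0 : ℝ))

/-- The Galaga obstacle set. -/
def GalagaObst : Set (ℝ × ℝ) := GalagaFreeᶜ

/-- Admissible Galaga trajectories from `x` to `z` in time `T`:
`ẋ₁ = u ∈ [-1,1]`, `ẋ₂ = 1`, staying in the closure of free space. -/
def GalagaAdm (x z : ℝ × ℝ) (T : ℝ) : Prop :=
  0 ≤ T ∧ ∃ π : ℝ → ℝ × ℝ,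
    π 0 = x ∧ π T = z ∧
    (∀ t ∈ Icc (0:ℝ) T, π t ∈ closure GalagaFree) ∧
    (∀ t ∈ Icc (0:ℝ) T, (π t).2 = x.2 + t) ∧
    ∃ u : ℝ → ℝ, (∀ t, |u t| ≤ 1) ∧
      IntervalIntegrable u MeasureTheory.volume 0 T ∧
      ∀ t ∈ Icc (0:ℝ) T, (π t).1 = x.1 + ∫ s in (0:ℝ)..t, u s

/-- The minimal-time quasi-metric of the Galaga system (`⊤` when unreachable). -/
noncomputable def galagaDist (x z : ℝ × ℝ) : ℝ≥0∞ :=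
  sInf {c : ℝ≥0∞ | ∃ T : ℝ, GalagaAdm x z T ∧ c = ENNReal.ofReal T}

/-- Clearance from the Galaga obstacle. -/
noncomputable def galagaClr (x : ℝ × ℝ) : ℝ≥0∞ :=
  ⨅ y ∈ frontier GalagaObst, galagaDist x y

/-!
Since `ẋ₂ = 1`, a trajectory from `x` reaches `y` in time exactly `y.2 - x.2`, and its horizontal
displacement `|y.1 - x.1|` is at most that time. The boundary of the obstacle consists of points
with `y.1 ≤ -1` or `y.1 = 2`, and above height `0` only of the walls `y.1 = -5` and `y.1 = 2`.
From `(-1/2, -1)` the wall `y.1 = -1` is at horizontal distance `1/2`; but `(-1/2, 0)` already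
sits in the wide passage, so it must climb to a wall at horizontal distance at least `5/2`.
Both bounds are attained by straight trajectories of slope `±1`, and `(-1/2, 0)` is reached from
`(-1/2, -1)` by going straight up in time `1`.
-/

lemma closure_galagaFree : closure GalagaFree =
    (Icc (-1 : ℝ) 2 ×ˢ Iic (0 : ℝ)) ∪ (Icc (-5 : ℝ) 2 ×ˢ Ici (0 : ℝ)) := by
  rw [GalagaFree, closure_union, closure_prod_eq, closure_prod_eq, closure_Ioo (by norm_num),
    closure_Ioo (by norm_num), closure_Iic, closure_Ioi]

lemma isOpen_galagaFree : IsOpen GalagaFree := by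
  have hfree : GalagaFree = (Ioo (-1 : ℝ) 2 ×ˢ univ) ∪ (Ioo (-5 : ℝ) 2 ×ˢ Ioi (0 : ℝ)) := by
    ext ⟨a, b⟩
    simp only [GalagaFree, mem_union, mem_prod, mem_Ioo, mem_Iic, mem_Ioi, mem_univ, and_true]
    constructor
    · rintro (⟨ha, -⟩ | h)
      exacts [Or.inl ha, Or.inr h]
    · rintro (ha | h)
      · rcases le_or_gt b 0 with hb | hb
        exacts [Or.inl ⟨ha, hb⟩, Or.inr ⟨⟨by linarith [ha.1], ha.2⟩, hb⟩]
      · exact Or.inr h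
  rw [hfree]
  exact (isOpen_Ioo.prod isOpen_univ).union (isOpen_Ioo.prod isOpen_Ioi)

lemma frontier_galagaObst : frontier GalagaObst = closure GalagaFree \ GalagaFree := by
  rw [GalagaObst, frontier_compl, isOpen_galagaFree.frontier_eq]

lemma fst_le_neg_one_or_eq_two_of_mem_frontier {y : ℝ × ℝ} (hy : y ∈ frontier GalagaObst) :
    y.1 ≤ -1 ∨ y.1 = 2 := by
  obtain ⟨a, b⟩ := y
  rw [frontier_galagaObst, closure_galagaFree] at hy
  simp only [GalagaFree, mem_sdiff, mem_union, mem_prod, mem_Icc, mem_Iic, mem_Ici, mem_Ioo,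
    mem_Ioi] at hy
  grind

lemma fst_eq_neg_five_or_two_of_mem_frontier {y : ℝ × ℝ} (hy : y ∈ frontier GalagaObst)
    (hy₂ : 0 < y.2) : y.1 = -5 ∨ y.1 = 2 := by
  obtain ⟨a, b⟩ := y
  rw [frontier_galagaObst, closure_galagaFree] at hy
  simp only [GalagaFree, mem_sdiff, mem_union, mem_prod, mem_Icc, mem_Iic, mem_Ici, mem_Ioo,
    mem_Ioi] at hy
  grind

namespace GalagaAdm

variable {x y : ℝ × ℝ} {T : ℝ}

lemma snd_eq (h : GalagaAdm x y T) : y.2 = x.2 + T := by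
  obtain ⟨hT, π, -, rfl, -, hπ₂, -⟩ := h
  exact hπ₂ T ⟨hT, le_rfl⟩

lemma abs_fst_sub_le (h : GalagaAdm x y T) : |y.1 - x.1| ≤ T := by
  obtain ⟨hT, π, -, rfl, -, -, u, hu, -, hπ₁⟩ := h
  rw [hπ₁ T ⟨hT, le_rfl⟩, add_sub_cancel_left]
  simpa [abs_of_nonneg hT] using
    intervalIntegral.norm_integral_le_of_norm_le_const (C := 1) (a := 0) (b := T)
      fun s _ => (Real.norm_eq_abs _).le.trans (hu s)

end GalagaAdm

lemma galagaAdm_of_convex {s : Set (ℝ × ℝ)} (hs : Convex ℝ s) (hsub : s ⊆ closure GalagaFree)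
    {x y : ℝ × ℝ} (hx : x ∈ s) (hy : y ∈ s) (hxy : x.2 < y.2) (hslope : |y.1 - x.1| ≤ y.2 - x.2) :
    GalagaAdm x y (y.2 - x.2) := by
  set T := y.2 - x.2
  have hT : 0 < T := sub_pos.2 hxy
  refine ⟨hT.le, fun t => x + (t / T) • (y - x), by simp, by simp [hT.ne'],
    fun t ht => hsub <| hs.add_smul_sub_mem hx hy
      ⟨div_nonneg ht.1 hT.le, div_le_one_of_le₀ ht.2 hT.le⟩,
    fun t _ => by simp [T, hT.ne'], fun _ => (y.1 - x.1) / T, fun _ => ?_,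
    intervalIntegrable_const, fun t _ => ?_⟩
  · rw [abs_div, abs_of_pos hT]
    exact div_le_one_of_le₀ hslope hT.le
  · simp only [Prod.fst_add, Prod.smul_fst, Prod.fst_sub, smul_eq_mul,
      intervalIntegral.integral_const, sub_zero]
    ring

lemma GalagaAdm.galagaDist_eq {x y : ℝ × ℝ} {T : ℝ} (h : GalagaAdm x y T) :
    galagaDist x y = ENNReal.ofReal T := by
  refine le_antisymm (sInf_le ⟨T, h, rfl⟩) (le_sInf ?_)
  rintro _ ⟨T', h', rfl⟩
  rw [show T' = T by linarith [h.snd_eq, h'.snd_eq]]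

lemma galagaClr_le_of_galagaAdm {x y : ℝ × ℝ} {T : ℝ} (hy : y ∈ frontier GalagaObst)
    (h : GalagaAdm x y T) : galagaClr x ≤ ENNReal.ofReal T :=
  (iInf₂_le y hy).trans_eq h.galagaDist_eq

lemma le_galagaClr {x : ℝ × ℝ} {r : ℝ}
    (h : ∀ y ∈ frontier GalagaObst, ∀ T, GalagaAdm x y T → r ≤ T) :
    ENNReal.ofReal r ≤ galagaClr x :=
  le_iInf₂ fun y hy => le_sInf <| by
    rintro _ ⟨T, hT, rfl⟩
    exact ENNReal.ofReal_le_ofReal (h y hy T hT)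

lemma galagaClr_neg_half_neg_one : galagaClr (-1/2, -1) = ENNReal.ofReal (1/2) := by
  refine le_antisymm ?_ (le_galagaClr fun y hy T h => ?_)
  · have hy : ((-1 : ℝ), (-1/2 : ℝ)) ∈ frontier GalagaObst := by
      rw [frontier_galagaObst, closure_galagaFree]
      norm_num [GalagaFree]
    have h := galagaAdm_of_convex ((convex_Icc _ _).prod (convex_Iic _))
      (closure_galagaFree ▸ subset_union_left) (x := (-1/2, -1)) (y := (-1, -1/2))
      (by norm_num) (by norm_num) (by norm_num) (by norm_num)
    exact (galagaClr_le_of_galagaAdm hy h).trans_eq (by norm_num)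
  · have hT := abs_le.1 h.abs_fst_sub_le
    rcases fst_le_neg_one_or_eq_two_of_mem_frontier hy with hy₁ | hy₁ <;> linarith [hT.1, hT.2]

lemma galagaClr_neg_half_zero : galagaClr (-1/2, 0) = ENNReal.ofReal (5/2) := by
  refine le_antisymm ?_ (le_galagaClr fun y hy T h => ?_)
  · have hy : ((2 : ℝ), (5/2 : ℝ)) ∈ frontier GalagaObst := by
      rw [frontier_galagaObst, closure_galagaFree]
      norm_num [GalagaFree]
    have h := galagaAdm_of_convex ((convex_Icc _ _).prod (convex_Ici _))
      (closure_galagaFree ▸ subset_union_right) (x := (-1/2, 0)) (y := (2, 5/2))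
      (by norm_num) (by norm_num) (by norm_num) (by norm_num)
    exact (galagaClr_le_of_galagaAdm hy h).trans_eq (by norm_num)
  · have hT := abs_le.1 h.abs_fst_sub_le
    -- a frontier point reached from height `0` lies above it, since `(-1/2, 0)` itself is free
    have hy₂ : 0 < y.2 := by
      rcases fst_le_neg_one_or_eq_two_of_mem_frontier hy with hy₁ | hy₁ <;>
        linarith [h.snd_eq, hT.1, hT.2]
    rcases fst_eq_neg_five_or_two_of_mem_frontier hy hy₂ with hy₁ | hy₁ <;> linarith [hT.1, hT.2]

lemma galagaDist_neg_half_neg_one_neg_half_zero : galagaDist (-1/2, -1) (-1/2, 0) = 1 := by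
  have h := galagaAdm_of_convex ((convex_Icc _ _).prod (convex_Iic _))
    (closure_galagaFree ▸ subset_union_left) (x := (-1/2, -1)) (y := (-1/2, 0))
    (by norm_num) (by norm_num) (by norm_num) (by norm_num)
  rw [h.galagaDist_eq]
  norm_num

/-- The clearances of `(-1/2,-1)` and `(-1/2,0)`, showing that clearance fails to be
Lipschitz with respect to the cost quasi-metric. -/
theorem galaga_clearance_not_lipschitz :
    galagaClr (-1/2, -1) = 1/2 ∧ galagaClr (-1/2, 0) = 5/2 ∧
    galagaDist (-1/2, -1) (-1/2, 0) = 1 ∧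
    galagaDist (-1/2, -1) (-1/2, 0) <
      galagaClr (-1/2, 0) - galagaClr (-1/2, -1) := by
  have half : ENNReal.ofReal (1/2) = 1/2 := by rw [ENNReal.ofReal_div_of_pos two_pos]; simp
  have five_half : ENNReal.ofReal (5/2) = 5/2 := by rw [ENNReal.ofReal_div_of_pos two_pos]; simp
  refine ⟨galagaClr_neg_half_neg_one.trans half, galagaClr_neg_half_zero.trans five_half,
    galagaDist_neg_half_neg_one_neg_half_zero, ?_⟩
  rw [galagaDist_neg_half_neg_one_neg_half_zero, galagaClr_neg_half_neg_one,
    galagaClr_neg_half_zero, ← ENNReal.ofReal_sub _ (by norm_num)]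
  norm_num
end

section
/- (Small-time non-returnability.) Let F satisfy the standing hypotheses (nonempty convex compact values, closed graph, locally bounded, locally Lipschitz), let x lie in open free space X_free, and suppose h_F(x,ξ) > 0 for some ξ ≠ 0. Then there exists ρ* > 0 such that for every ρ ∈ (0, ρ*) there exists r(ρ) > 0 with the property: whenever y satisfies ρ ≤ min{d_c(x,y), d_c(y,x)} < ρ*, it holds that ‖x − y‖ ≥ r(ρ). Equivalently, B_{ρ*}(x) \ B_ρ(x) ⊆ complement of the metric ball B_{r(ρ)}(x), where B_ρ(x) denotes the cost ball F_ρ(x) ∪ R_ρ(x). -/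
open Set MeasureTheory Metric ENNReal

/-- An admissible trajectory of the inclusion `π̇ ∈ F(π)` on `[0,T]`, constrained to the
closure of the free space, with (a.e.) derivative `π'`. -/
def IsAdmTraj {n : ℕ} (F : EuclideanSpace ℝ (Fin n) → Set (EuclideanSpace ℝ (Fin n)))
    (Xfree : Set (EuclideanSpace ℝ (Fin n))) (T : ℝ)
    (π π' : ℝ → EuclideanSpace ℝ (Fin n)) : Prop :=
  0 ≤ T ∧
  (∀ t ∈ Icc (0:ℝ) T, π t = π 0 + ∫ s in (0:ℝ)..t, π' s) ∧
  IntervalIntegrable π' MeasureTheory.volume 0 T ∧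
  (∀ᵐ t ∂(MeasureTheory.volume.restrict (Icc (0:ℝ) T)), π' t ∈ F (π t)) ∧
  (∀ t ∈ Icc (0:ℝ) T, π t ∈ closure Xfree)

/-- The cost quasi-metric: infimal running cost over admissible trajectories from `x` to `y`
(`⊤` if there is none). -/
noncomputable def costDist {n : ℕ}
    (F : EuclideanSpace ℝ (Fin n) → Set (EuclideanSpace ℝ (Fin n)))
    (ψ : EuclideanSpace ℝ (Fin n) → EuclideanSpace ℝ (Fin n) → ℝ)
    (Xfree : Set (EuclideanSpace ℝ (Fin n)))
    (x y : EuclideanSpace ℝ (Fin n)) : ℝ≥0∞ :=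
  sInf {c : ℝ≥0∞ | ∃ T : ℝ, ∃ π π' : ℝ → EuclideanSpace ℝ (Fin n),
    IsAdmTraj F Xfree T π π' ∧ π 0 = x ∧ π T = y ∧
    c = ENNReal.ofReal (∫ t in (0:ℝ)..T, ψ (π t) (π' t))}

/-!
Write `s = h_F(x, ξ) > 0`. By the Lipschitz property every velocity available within a small
ball `B(x, δ)` satisfies `⟪ξ, v⟫ ≥ s / 2`, and by compactness the running cost there is pinched
between positive constants; hence `‖v‖ ≤ L ψ` and `κ ψ ≤ ⟪ξ, v⟫` on the ball. A trajectory
starting or ending at `x` with cost below `δ / L` cannot reach the boundary of the ball, since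
covering a distance `δ` costs at least `δ / L`. Inside the ball the progress along `ξ` is at
least `κ` times the cost, so cost at least `ρ` forces `‖ξ‖ ‖x - y‖ ≥ κ ρ`.
-/

open scoped RealInnerProductSpace

theorem Real.bddBelow_of_sInf_pos {s : Set ℝ} (h : 0 < sInf s) : BddBelow s := by
  by_contra hs
  rw [Real.sInf_of_not_bddBelow hs] at h
  exact h.false

theorem IsCompact.exists_pos_le_and_le {α : Type*} [TopologicalSpace α] {K : Set α}
    (hK : IsCompact K) {f : α → ℝ} (hf : ContinuousOn f K) (hpos : ∀ p ∈ K, 0 < f p) :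
    ∃ m > 0, ∃ C > 0, ∀ p ∈ K, m ≤ f p ∧ f p ≤ C := by
  obtain ⟨m, hm, hmf⟩ := hK.exists_forall_le' hf hpos
  obtain ⟨C, hC⟩ := hK.exists_bound_of_continuousOn hf
  refine ⟨m, hm, max C 1, by positivity, fun p hp => ⟨hmf p hp, ?_⟩⟩
  exact (le_abs_self _).trans ((hC p hp).trans (le_max_left _ _))

section Continuity

variable {α β : Type*} [ConditionallyCompleteLinearOrder α] [TopologicalSpace α]
  [OrderTopology α] [TopologicalSpace β] {γ : α → β} {U : Set β} {a b : α}

/-- Continuous induction: the first time `γ` leaves the open set `U` would violate `hstep`. -/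
theorem ContinuousOn.mapsTo_of_forall_mapsTo_Ico (hU : IsOpen U)
    (hγ : ContinuousOn γ (Icc a b))
    (hstep : ∀ t ∈ Icc a b, MapsTo γ (Ico a t) U → γ t ∈ U) : MapsTo γ (Icc a b) U := by
  intro t₀ ht₀
  by_contra hout
  set S := Icc a b ∩ γ ⁻¹' Uᶜ
  have hS : IsClosed S := hγ.preimage_isClosed_of_isClosed isClosed_Icc hU.isClosed_compl
  have hbdd : BddBelow S := ⟨a, fun t ht => ht.1.1⟩
  have hmem : sInf S ∈ S := hS.csInf_mem ⟨t₀, ht₀, hout⟩ hbdd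
  refine hmem.2 (hstep _ hmem.1 fun s hs => ?_)
  by_contra hsU
  exact hs.2.not_ge (csInf_le hbdd ⟨⟨hs.1, hs.2.le.trans hmem.1.2⟩, hsU⟩)

theorem ContinuousOn.mapsTo_of_forall_mapsTo_Ioc (hU : IsOpen U)
    (hγ : ContinuousOn γ (Icc a b))
    (hstep : ∀ t ∈ Icc a b, MapsTo γ (Ioc t b) U → γ t ∈ U) : MapsTo γ (Icc a b) U := by
  have hdual := ContinuousOn.mapsTo_of_forall_mapsTo_Ico (α := αᵒᵈ) (a := OrderDual.toDual b)
    (b := OrderDual.toDual a) hU (by rw [Icc_toDual]; exact hγ) fun t ht hIco => by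
      rw [Icc_toDual] at ht
      exact hstep t ht fun s hs => hIco ⟨hs.2, hs.1⟩
  rw [Icc_toDual] at hdual
  exact hdual

end Continuity

section Local

variable {E : Type*} [NormedAddCommGroup E] [InnerProductSpace ℝ E] {F : E → Set E} {x ξ : E}
  {s k : ℝ}

theorem exists_closedBall_half_le_inner (hs : 0 < s) (hk : 0 ≤ k)
    (hFx : ∀ w ∈ F x, s ≤ ⟪ξ, w⟫)
    (hLip : ∀ p ∈ closedBall x 1, ∀ v ∈ F p, ∃ w ∈ F x, ‖v - w‖ ≤ k * ‖p - x‖) :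
    ∃ δ ∈ Ioc (0 : ℝ) 1, ∀ p ∈ closedBall x δ, ∀ v ∈ F p, s / 2 ≤ ⟪ξ, v⟫ := by
  set δ := min 1 (s / (2 * (k * ‖ξ‖ + 1)))
  have hδ : 0 < δ := lt_min one_pos (by positivity)
  refine ⟨δ, ⟨hδ, min_le_left _ _⟩, fun p hp v hv => ?_⟩
  obtain ⟨w, hw, hvw⟩ := hLip p (closedBall_subset_closedBall (min_le_left _ _) hp) v hv
  have hpx : ‖p - x‖ ≤ δ := by rwa [← dist_eq_norm]
  have hδs : (k * ‖ξ‖ + 1) * δ ≤ s / 2 := by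
    rw [← le_div_iff₀' (by positivity), div_div]
    exact min_le_right _ _
  have hdev : ‖ξ‖ * ‖v - w‖ ≤ s / 2 := calc
    ‖ξ‖ * ‖v - w‖ ≤ ‖ξ‖ * (k * δ) := by gcongr; exact hvw.trans (by gcongr)
    _ ≤ (k * ‖ξ‖ + 1) * δ := by nlinarith
    _ ≤ s / 2 := hδs
  calc s / 2 ≤ ⟪ξ, w⟫ - ‖ξ‖ * ‖v - w‖ := by linarith [hFx w hw]
    _ ≤ ⟪ξ, w⟫ + ⟪ξ, v - w⟫ := by
      linarith [neg_abs_le ⟪ξ, v - w⟫, abs_real_inner_le_norm ξ (v - w)]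
    _ = ⟪ξ, v⟫ := by rw [← inner_add_right, add_sub_cancel]

theorem exists_ball_norm_le_and_le_inner [ProperSpace E] {ψ : E → E → ℝ} {M : ℝ}
    (hψcont : Continuous fun q : E × E => ψ q.1 q.2) (hψpos : ∀ p v, 0 < ψ p v) (hM : 0 < M)
    (hFM : ∀ p ∈ closedBall x 1, ∀ v ∈ F p, ‖v‖ ≤ M) (hs : 0 < s) (hk : 0 ≤ k)
    (hFx : ∀ w ∈ F x, s ≤ ⟪ξ, w⟫)
    (hLip : ∀ p ∈ closedBall x 1, ∀ v ∈ F p, ∃ w ∈ F x, ‖v - w‖ ≤ k * ‖p - x‖) :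
    ∃ δ > 0, ∃ L > 0, ∃ κ > 0, ∀ p ∈ ball x δ, ∀ v ∈ F p,
      ‖v‖ ≤ L * ψ p v ∧ κ * ψ p v ≤ ⟪ξ, v⟫ := by
  obtain ⟨δ, ⟨hδ, hδ1⟩, hξF⟩ := exists_closedBall_half_le_inner hs hk hFx hLip
  obtain ⟨m, hm, C, hC, hψ⟩ := ((isCompact_closedBall x δ).prod (isCompact_closedBall 0 M)
    |>.exists_pos_le_and_le hψcont.continuousOn fun q _ => hψpos q.1 q.2)
  refine ⟨δ, hδ, M / m, by positivity, s / 2 / C, by positivity, fun p hp v hv => ?_⟩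
  have hp' : p ∈ closedBall x δ := ball_subset_closedBall hp
  have hvM : ‖v‖ ≤ M := hFM p (closedBall_subset_closedBall hδ1 hp') v hv
  obtain ⟨hmψ, hψC⟩ := hψ (p, v) ⟨hp', by simpa using hvM⟩
  constructor
  · calc ‖v‖ ≤ M / m * m := by rwa [div_mul_cancel₀ _ hm.ne']
      _ ≤ M / m * ψ p v := by gcongr
  · calc s / 2 / C * ψ p v ≤ s / 2 / C * C := by gcongr
      _ = s / 2 := div_mul_cancel₀ _ hC.ne'
      _ ≤ ⟪ξ, v⟫ := hξF p hp' v hv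

end Local

section Trajectories

variable {n : ℕ} {F : EuclideanSpace ℝ (Fin n) → Set (EuclideanSpace ℝ (Fin n))}
  {Xfree : Set (EuclideanSpace ℝ (Fin n))}
  {ψ : EuclideanSpace ℝ (Fin n) → EuclideanSpace ℝ (Fin n) → ℝ}
  {x ξ : EuclideanSpace ℝ (Fin n)} {T u w δ L κ ρ : ℝ} {π π' : ℝ → EuclideanSpace ℝ (Fin n)}

namespace IsAdmTraj

theorem continuousOn (h : IsAdmTraj F Xfree T π π') : ContinuousOn π (Icc 0 T) := by
  have hprim := intervalIntegral.continuousOn_primitive_interval' h.2.2.1 left_mem_uIcc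
  rw [uIcc_of_le h.1] at hprim
  exact (continuousOn_const.add hprim).congr h.2.1

theorem intervalIntegrable_deriv (h : IsAdmTraj F Xfree T π π') (hu : u ∈ Icc 0 T)
    (hw : w ∈ Icc 0 T) : IntervalIntegrable π' volume u w := by
  refine h.2.2.1.mono_set (uIcc_subset_uIcc ?_ ?_) <;> rwa [uIcc_of_le h.1]

theorem sub_eq_integral (h : IsAdmTraj F Xfree T π π') (hu : u ∈ Icc 0 T) (hw : w ∈ Icc 0 T) :
    π w - π u = ∫ t in u..w, π' t := by
  have h0 : (0 : ℝ) ∈ Icc 0 T := ⟨le_rfl, h.1⟩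
  rw [h.2.1 w hw, h.2.1 u hu, add_sub_add_left_eq_sub, intervalIntegral.integral_interval_sub_left
    (h.intervalIntegrable_deriv h0 hw) (h.intervalIntegrable_deriv h0 hu)]

theorem ae_deriv_mem (h : IsAdmTraj F Xfree T π π') (hu : 0 ≤ u) (hw : w ≤ T) :
    ∀ᵐ t ∂volume.restrict (Icc u w), π' t ∈ F (π t) :=
  ae_mono (Measure.restrict_mono (Icc_subset_Icc hu hw) le_rfl) h.2.2.2.1

theorem norm_sub_le_mul_cost (h : IsAdmTraj F Xfree T π π') (hψ : ∀ p v, 0 ≤ ψ p v)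
    (hcost : IntervalIntegrable (fun t => ψ (π t) (π' t)) volume 0 T) {U : Set _}
    (hL : 0 ≤ L) (hU : ∀ p ∈ U, ∀ v ∈ F p, ‖v‖ ≤ L * ψ p v) (hu : 0 ≤ u) (huw : u ≤ w)
    (hw : w ≤ T) (hin : MapsTo π (Ioo u w) U) :
    ‖π w - π u‖ ≤ L * ∫ t in (0 : ℝ)..T, ψ (π t) (π' t) := by
  have huT : u ∈ Icc 0 T := ⟨hu, huw.trans hw⟩
  have hwT : w ∈ Icc 0 T := ⟨hu.trans huw, hw⟩
  have hsub : uIcc u w ⊆ uIcc 0 T := by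
    rw [uIcc_of_le huw, uIcc_of_le h.1]; exact Icc_subset_Icc hu hw
  have hspeed : ∀ᵐ t ∂volume.restrict (Icc u w), ‖π' t‖ ≤ L * ψ (π t) (π' t) := by
    have hIoo : ∀ᵐ t ∂volume.restrict (Icc u w), t ∈ Ioo u w := by
      rw [← restrict_Ioo_eq_restrict_Icc]
      exact ae_restrict_mem measurableSet_Ioo
    filter_upwards [h.ae_deriv_mem hu hw, hIoo] with t hF ht
    exact hU _ (hin ht) _ hF
  calc ‖π w - π u‖ = ‖∫ t in u..w, π' t‖ := by rw [h.sub_eq_integral huT hwT]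
    _ ≤ ∫ t in u..w, ‖π' t‖ := intervalIntegral.norm_integral_le_integral_norm huw
    _ ≤ ∫ t in u..w, L * ψ (π t) (π' t) :=
      intervalIntegral.integral_mono_ae_restrict huw (h.intervalIntegrable_deriv huT hwT).norm
        ((hcost.mono_set hsub).const_mul L) hspeed
    _ = L * ∫ t in u..w, ψ (π t) (π' t) := intervalIntegral.integral_const_mul _ _
    _ ≤ L * ∫ t in (0 : ℝ)..T, ψ (π t) (π' t) := by
      gcongr
      exact intervalIntegral.integral_mono_interval hu huw hw
        (Filter.Eventually.of_forall fun t => hψ _ _) hcost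

theorem mul_cost_le_inner (h : IsAdmTraj F Xfree T π π')
    (hcost : IntervalIntegrable (fun t => ψ (π t) (π' t)) volume 0 T) {U : Set _}
    (hU : ∀ p ∈ U, ∀ v ∈ F p, κ * ψ p v ≤ ⟪ξ, v⟫)
    (hin : MapsTo π (Icc 0 T) U) :
    κ * ∫ t in (0 : ℝ)..T, ψ (π t) (π' t) ≤ ⟪ξ, π T - π 0⟫ := by
  have h0 : (0 : ℝ) ∈ Icc 0 T := ⟨le_rfl, h.1⟩
  have hT : T ∈ Icc 0 T := ⟨h.1, le_rfl⟩
  have hπ' := h.intervalIntegrable_deriv h0 hT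
  have hprogress : ∀ᵐ t ∂volume.restrict (Icc 0 T), κ * ψ (π t) (π' t) ≤ ⟪ξ, π' t⟫ := by
    filter_upwards [h.ae_deriv_mem le_rfl le_rfl, ae_restrict_mem measurableSet_Icc] with t hF ht
    exact hU _ (hin ht) _ hF
  calc κ * ∫ t in (0 : ℝ)..T, ψ (π t) (π' t) = ∫ t in (0 : ℝ)..T, κ * ψ (π t) (π' t) :=
        (intervalIntegral.integral_const_mul _ _).symm
    _ ≤ ∫ t in (0 : ℝ)..T, ⟪ξ, π' t⟫ :=
      intervalIntegral.integral_mono_ae_restrict h.1 (hcost.const_mul κ)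
        ⟨(innerSL ℝ ξ).integrable_comp hπ'.1, (innerSL ℝ ξ).integrable_comp hπ'.2⟩ hprogress
    _ = ⟪ξ, π T - π 0⟫ := by
      rw [h.sub_eq_integral h0 hT]
      exact (innerSL ℝ ξ).intervalIntegral_comp_comm hπ'

theorem mapsTo_ball (h : IsAdmTraj F Xfree T π π') (hψ : ∀ p v, 0 ≤ ψ p v)
    (hcost : IntervalIntegrable (fun t => ψ (π t) (π' t)) volume 0 T) (hL : 0 ≤ L)
    (hU : ∀ p ∈ ball x δ, ∀ v ∈ F p, ‖v‖ ≤ L * ψ p v)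
    (hδ : L * ∫ t in (0 : ℝ)..T, ψ (π t) (π' t) < δ) (hend : π 0 = x ∨ π T = x) :
    MapsTo π (Icc 0 T) (ball x δ) := by
  rcases hend with h0 | hT
  · refine h.continuousOn.mapsTo_of_forall_mapsTo_Ico isOpen_ball fun t ht hin => ?_
    rw [mem_ball, dist_eq_norm, ← h0]
    exact (h.norm_sub_le_mul_cost hψ hcost hL hU le_rfl ht.1 ht.2
      (hin.mono_left Ioo_subset_Ico_self)).trans_lt hδ
  · refine h.continuousOn.mapsTo_of_forall_mapsTo_Ioc isOpen_ball fun t ht hin => ?_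
    rw [mem_ball, dist_eq_norm', ← hT]
    exact (h.norm_sub_le_mul_cost hψ hcost hL hU ht.1 ht.2 le_rfl
      (hin.mono_left Ioo_subset_Ioc_self)).trans_lt hδ

theorem mul_le_norm_mul_dist (h : IsAdmTraj F Xfree T π π') (hψ : ∀ p v, 0 < ψ p v)
    (hL : 0 < L) (hκ : 0 ≤ κ)
    (hbounds : ∀ p ∈ ball x δ, ∀ v ∈ F p, ‖v‖ ≤ L * ψ p v ∧ κ * ψ p v ≤ ⟪ξ, v⟫)
    (hend : π 0 = x ∨ π T = x) (hρ : 0 < ρ) (hlo : ρ ≤ ∫ t in (0 : ℝ)..T, ψ (π t) (π' t))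
    (hhi : ∫ t in (0 : ℝ)..T, ψ (π t) (π' t) < δ / L) :
    κ * ρ ≤ ‖ξ‖ * dist (π 0) (π T) := by
  -- otherwise the cost integral would be the junk value `0 < ρ`
  have hcost : IntervalIntegrable (fun t => ψ (π t) (π' t)) volume 0 T := by
    by_contra hcost
    rw [intervalIntegral.integral_undef hcost] at hlo
    exact hρ.not_ge hlo
  have hball := h.mapsTo_ball (fun p v => (hψ p v).le) hcost hL.le
    (fun p hp v hv => (hbounds p hp v hv).1) (by rwa [lt_div_iff₀' hL] at hhi) hend
  calc κ * ρ ≤ κ * ∫ t in (0 : ℝ)..T, ψ (π t) (π' t) := by gcongr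
    _ ≤ ⟪ξ, π T - π 0⟫ :=
      h.mul_cost_le_inner hcost (fun p hp v hv => (hbounds p hp v hv).2) hball
    _ ≤ ‖ξ‖ * ‖π T - π 0‖ := real_inner_le_norm _ _
    _ = ‖ξ‖ * dist (π 0) (π T) := by rw [dist_eq_norm']

end IsAdmTraj

theorem exists_isAdmTraj_of_costDist_mem_Ico {y : EuclideanSpace ℝ (Fin n)} {ρ' : ℝ}
    (hρ : 0 < ρ) (hlo : ENNReal.ofReal ρ ≤ costDist F ψ Xfree x y)
    (hhi : costDist F ψ Xfree x y < ENNReal.ofReal ρ') :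
    ∃ T π π', IsAdmTraj F Xfree T π π' ∧ π 0 = x ∧ π T = y ∧
      ρ ≤ (∫ t in (0 : ℝ)..T, ψ (π t) (π' t)) ∧ (∫ t in (0 : ℝ)..T, ψ (π t) (π' t)) < ρ' := by
  obtain ⟨c, ⟨T, π, π', h, h0, hT, rfl⟩, hc⟩ := sInf_lt_iff.mp hhi
  refine ⟨T, π, π', h, h0, hT, ?_, (ENNReal.ofReal_lt_ofReal_iff'.mp hc).1⟩
  have := hlo.trans (sInf_le ⟨T, π, π', h, h0, hT, rfl⟩)
  exact (ENNReal.ofReal_le_ofReal_iff'.mp this).resolve_right hρ.not_ge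

end Trajectories

theorem small_time_non_returnability_general {n : ℕ}
    (F : EuclideanSpace ℝ (Fin n) → Set (EuclideanSpace ℝ (Fin n)))
    -- (SH1) nonempty, closed, bounded, convex values with closed graph
    (hFbdd : ∀ K : Set (EuclideanSpace ℝ (Fin n)), IsCompact K →
      ∃ M > (0:ℝ), ∀ x ∈ K, ∀ v ∈ F x, ‖v‖ ≤ M)
    -- (SH3) local Lipschitz regularity
    (hLip : ∀ K : Set (EuclideanSpace ℝ (Fin n)), IsCompact K →
      ∃ k > (0:ℝ), ∀ x ∈ K, ∀ y ∈ K, ∀ v ∈ F x, ∃ w ∈ F y, ‖v - w‖ ≤ k * ‖x - y‖)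
    -- positive continuous running cost
    (ψ : EuclideanSpace ℝ (Fin n) → EuclideanSpace ℝ (Fin n) → ℝ)
    (hψcont : Continuous fun p : EuclideanSpace ℝ (Fin n) × EuclideanSpace ℝ (Fin n) =>
      ψ p.1 p.2)
    (hψpos : ∀ p v, 0 < ψ p v)
    -- open free space
    (Xfree : Set (EuclideanSpace ℝ (Fin n)))
    (x : EuclideanSpace ℝ (Fin n))
    (ξ : EuclideanSpace ℝ (Fin n)) (hξ : ξ ≠ 0)
    (hpos : 0 < sInf ((fun v => (inner ℝ v ξ : ℝ)) '' F x)) :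
    ∃ ρstar > (0:ℝ), ∀ ρ : ℝ, 0 < ρ → ρ < ρstar → ∃ r > (0:ℝ),
      ∀ y : EuclideanSpace ℝ (Fin n),
        ENNReal.ofReal ρ ≤ min (costDist F ψ Xfree x y) (costDist F ψ Xfree y x) →
        min (costDist F ψ Xfree x y) (costDist F ψ Xfree y x) < ENNReal.ofReal ρstar →
        r ≤ ‖x - y‖ := by
  obtain ⟨M, hM, hFM⟩ := hFbdd _ (isCompact_closedBall x 1)
  obtain ⟨k, hk, hkLip⟩ := hLip _ (isCompact_closedBall x 1)
  have hFx : ∀ w ∈ F x, sInf ((fun v => ⟪v, ξ⟫) '' F x) ≤ ⟪ξ, w⟫ := fun w hw => by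
    rw [real_inner_comm]
    exact csInf_le (Real.bddBelow_of_sInf_pos hpos) (mem_image_of_mem _ hw)
  obtain ⟨δ, hδ, L, hL, κ, hκ, hbounds⟩ := exists_ball_norm_le_and_le_inner hψcont hψpos hM hFM
    hpos hk.le hFx fun p hp v hv => hkLip p hp x (mem_closedBall_self zero_le_one) v hv
  have hξ' : 0 < ‖ξ‖ := norm_pos_iff.mpr hξ
  refine ⟨δ / L, by positivity, fun ρ hρ _ => ⟨κ * ρ / ‖ξ‖, by positivity, fun y hlo hhi => ?_⟩⟩
  rw [div_le_iff₀' hξ', ← dist_eq_norm]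
  rcases min_lt_iff.mp hhi with hxy | hyx
  · obtain ⟨T, π, π', h, h0, hT, hρI, hIδ⟩ :=
      exists_isAdmTraj_of_costDist_mem_Ico hρ (hlo.trans (min_le_left _ _)) hxy
    rw [← h0, ← hT]
    exact h.mul_le_norm_mul_dist hψpos hL hκ.le hbounds (.inl h0) hρ hρI hIδ
  · obtain ⟨T, π, π', h, h0, hT, hρI, hIδ⟩ :=
      exists_isAdmTraj_of_costDist_mem_Ico hρ (hlo.trans (min_le_right _ _)) hyx
    rw [dist_comm, ← h0, ← hT]
    exact h.mul_le_norm_mul_dist hψpos hL hκ.le hbounds (.inr hT) hρ hρI hIδ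

/-- Small-time non-returnability under a strictly positive minimal Hamiltonian. -/
theorem small_time_non_returnability {n : ℕ}
    (F : EuclideanSpace ℝ (Fin n) → Set (EuclideanSpace ℝ (Fin n)))
    -- (SH1) nonempty, closed, bounded, convex values with closed graph
    (hFne : ∀ x, (F x).Nonempty) (hFconv : ∀ x, Convex ℝ (F x))
    (hFgraph : IsClosed {p : EuclideanSpace ℝ (Fin n) × EuclideanSpace ℝ (Fin n) | p.2 ∈ F p.1})
    (hFbdd : ∀ K : Set (EuclideanSpace ℝ (Fin n)), IsCompact K →
      ∃ M > (0:ℝ), ∀ x ∈ K, ∀ v ∈ F x, ‖v‖ ≤ M)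
    -- (SH2) linear growth
    (hgrowth : ∃ γ c : ℝ, 0 < γ ∧ 0 < c ∧ ∀ x, ∀ v ∈ F x, ‖v‖ ≤ γ * ‖x‖ + c)
    -- (SH3) local Lipschitz regularity
    (hLip : ∀ K : Set (EuclideanSpace ℝ (Fin n)), IsCompact K →
      ∃ k > (0:ℝ), ∀ x ∈ K, ∀ y ∈ K, ∀ v ∈ F x, ∃ w ∈ F y, ‖v - w‖ ≤ k * ‖x - y‖)
    -- positive continuous running cost
    (ψ : EuclideanSpace ℝ (Fin n) → EuclideanSpace ℝ (Fin n) → ℝ)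
    (hψcont : Continuous fun p : EuclideanSpace ℝ (Fin n) × EuclideanSpace ℝ (Fin n) =>
      ψ p.1 p.2)
    (hψpos : ∀ p v, 0 < ψ p v)
    -- open free space
    (Xfree : Set (EuclideanSpace ℝ (Fin n))) (hopen : IsOpen Xfree)
    (x : EuclideanSpace ℝ (Fin n)) (hx : x ∈ Xfree)
    (ξ : EuclideanSpace ℝ (Fin n)) (hξ : ξ ≠ 0)
    (hpos : 0 < sInf ((fun v => (inner ℝ v ξ : ℝ)) '' F x)) :
    ∃ ρstar > (0:ℝ), ∀ ρ : ℝ, 0 < ρ → ρ < ρstar → ∃ r > (0:ℝ),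
      ∀ y : EuclideanSpace ℝ (Fin n),
        ENNReal.ofReal ρ ≤ min (costDist F ψ Xfree x y) (costDist F ψ Xfree y x) →
        min (costDist F ψ Xfree x y) (costDist F ψ Xfree y x) < ENNReal.ofReal ρstar →
        r ≤ ‖x - y‖ :=
  small_time_non_returnability_general F hFbdd hLip ψ hψcont hψpos Xfree x ξ hξ hpos
end
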